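/- Let b_1, …, b_ℓ be bounded operators on a Hilbert space 𝓗, let i ↦ i^* be an involution on {1,…,ℓ}, and let B and B̃ be the associated non-backtracking operators on 𝓗 ⊗ ℂ^ℓ. Let λ ∈ ℂ be such that λ² ∉ σ(b_{i^*} b_i) for every i ∈ {1,…,ℓ}, and define the bounded operator A^{(λ)} = b_0(λ) + Σ_{i=1}^ℓ b_i(λ) on 𝓗, where b_i(λ) = λ b_i (λ² − b_{i^*} b_i)^{−1} and b_0(λ) = −1 − Σ_{i=1}^ℓ b_i (λ² − b_{i^*} b_i)^{−1} b_{i^*}. Then λ ∈ σ(B) if and only if 0 ∈ σ(A^{(λ)}), and likewise λ ∈ σ(B̃) if and only if 0 ∈ σ(A^{(λ)}). -/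

import Mathlib

/-! Write `λ - B = M - Δ ∘ Σ_b`, where `(M v)_i = λ v_i + b_{i*} v_{i*}` only couples the
coordinates `i` and `i*`, `Σ_b v = ∑_j b_j v_j` and `Δ h = (h, …, h)`. The hypothesis on `λ` makes
`M` invertible, with `(M⁻¹ w)_i = (λ² - b_{i*} b_i)⁻¹ (λ w_i - b_{i*} w_{i*})`. Hence `λ - B` is
invertible iff `1 - M⁻¹ Δ Σ_b` is, iff (Jacobson's lemma, across the spaces `H` and `H^ℓ`)
`1 - Σ_b M⁻¹ Δ` is, and `Σ_b M⁻¹ Δ = A^{(λ)} + 1`. For `B̃` the same argument runs with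
`(M v)_i = λ v_i + b_i v_{i*}` and the factorisation through `h ↦ (b_i h)_i` and `v ↦ ∑_j v_j`;
the extra input is the intertwining `b_i (λ² - b_{i*} b_i)⁻¹ = (λ² - b_i b_{i*})⁻¹ b_i`. -/

open scoped ENNReal

noncomputable section

namespace SAF

variable {H : Type*} [NormedAddCommGroup H] [InnerProductSpace ℂ H]

/-- The canonical identification `H^ℓ → ⊕²_{i ∈ [ℓ]} H` as a continuous linear map. -/
def pilpOfPi (l : ℕ) (H : Type*) [NormedAddCommGroup H] [NormedSpace ℂ H] :
    ((i : Fin l) → H) →L[ℂ] PiLp 2 (fun _ : Fin l => H) :=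
  (PiLp.continuousLinearEquiv 2 ℂ (fun _ : Fin l => H)).symm.toContinuousLinearMap

/-- The coordinate projection `⊕²_{i ∈ [ℓ]} H → H` as a continuous linear map. -/
def pilpProj (l : ℕ) (H : Type*) [NormedAddCommGroup H] [NormedSpace ℂ H] (j : Fin l) :
    PiLp 2 (fun _ : Fin l => H) →L[ℂ] H :=
  (ContinuousLinearMap.proj j).comp
    (PiLp.continuousLinearEquiv 2 ℂ (fun _ : Fin l => H)).toContinuousLinearMap

/-- The (right) non-backtracking operator `B = ∑_{j ≠ i*} b_j ⊗ E_{ij}` on `H ⊗ ℂ^ℓ`,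
realized on the Hilbert direct sum `⊕²_{i ∈ [ℓ]} H`: `(B v) i = ∑_{j ≠ i*} b_j (v j)`. -/
def nbOp {l : ℕ} (H : Type*) [NormedAddCommGroup H] [NormedSpace ℂ H]
    (b : Fin l → H →L[ℂ] H) (inv : Fin l → Fin l) :
    PiLp 2 (fun _ : Fin l => H) →L[ℂ] PiLp 2 (fun _ : Fin l => H) :=
  (pilpOfPi l H).comp (ContinuousLinearMap.pi fun i =>
    ∑ j : Fin l, if j = inv i then 0 else (b j).comp (pilpProj l H j))

/-- The left non-backtracking operator `B̃ = ∑_{j ≠ i*} b_i ⊗ E_{ij}` on `H ⊗ ℂ^ℓ`: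
`(B̃ v) i = ∑_{j ≠ i*} b_i (v j)`. -/
def nbOpL {l : ℕ} (H : Type*) [NormedAddCommGroup H] [NormedSpace ℂ H]
    (b : Fin l → H →L[ℂ] H) (inv : Fin l → Fin l) :
    PiLp 2 (fun _ : Fin l => H) →L[ℂ] PiLp 2 (fun _ : Fin l => H) :=
  (pilpOfPi l H).comp (ContinuousLinearMap.pi fun i =>
    ∑ j : Fin l, if j = inv i then 0 else (b i).comp (pilpProj l H j))

/-- `b_i(λ) = λ b_i (λ² − b_{i*} b_i)⁻¹`. -/
def bLam {l : ℕ} [CompleteSpace H] (b : Fin l → H →L[ℂ] H) (inv : Fin l → Fin l)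
    (lam : ℂ) (i : Fin l) : H →L[ℂ] H :=
  lam • (b i * Ring.inverse (lam ^ 2 • (1 : H →L[ℂ] H) - b (inv i) * b i))

/-- `b_0(λ) = −1 − ∑_i b_i (λ² − b_{i*} b_i)⁻¹ b_{i*}`. -/
def bZeroLam {l : ℕ} [CompleteSpace H] (b : Fin l → H →L[ℂ] H) (inv : Fin l → Fin l)
    (lam : ℂ) : H →L[ℂ] H :=
  -1 - ∑ i : Fin l,
    b i * Ring.inverse (lam ^ 2 • (1 : H →L[ℂ] H) - b (inv i) * b i) * b (inv i)

/-- `A^{(λ)} = b_0(λ) + ∑_i b_i(λ)`. -/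
def aLam {l : ℕ} [CompleteSpace H] (b : Fin l → H →L[ℂ] H) (inv : Fin l → Fin l)
    (lam : ℂ) : H →L[ℂ] H :=
  bZeroLam b inv lam + ∑ i : Fin l, bLam b inv lam i

open ContinuousLinearMap

section OperatorUnits

variable {R E F : Type*} [Ring R]
  [TopologicalSpace E] [AddCommGroup E] [Module R E] [IsTopologicalAddGroup E]
  [TopologicalSpace F] [AddCommGroup F] [Module R F] [IsTopologicalAddGroup F]

theorem isUnit_one_sub_comp_of_isUnit_one_sub_comp {X : E →L[R] F} {Y : F →L[R] E}
    (h : IsUnit (1 - X.comp Y)) : IsUnit (1 - Y.comp X) := by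
  obtain ⟨T, hT₁, hT₂⟩ := isUnit_iff_exists.mp h
  refine isUnit_iff_exists.mpr ⟨1 + Y.comp (T.comp X), ?_, ?_⟩ <;> ext x
  · have := congrArg Y (DFunLike.congr_fun hT₁ (X x))
    simp only [mul_apply_eq_comp, sub_apply, add_apply, one_apply_eq_self, comp_apply, map_add,
      map_sub] at this ⊢
    linear_combination (norm := module) this
  · have := congrArg Y (DFunLike.congr_fun hT₂ (X x))
    simp only [mul_apply_eq_comp, sub_apply, add_apply, one_apply_eq_self, comp_apply,
      map_sub] at this ⊢
    linear_combination (norm := module) this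

theorem isUnit_one_sub_comp_comm (X : E →L[R] F) (Y : F →L[R] E) :
    IsUnit (1 - X.comp Y) ↔ IsUnit (1 - Y.comp X) :=
  ⟨isUnit_one_sub_comp_of_isUnit_one_sub_comp, isUnit_one_sub_comp_of_isUnit_one_sub_comp⟩

theorem isUnit_units_sub_comp_iff (u : (E →L[R] E)ˣ) (Y : F →L[R] E) (X : E →L[R] F) :
    IsUnit (↑u - Y.comp X) ↔ IsUnit (1 - X.comp ((↑u⁻¹ : E →L[R] E).comp Y)) := by
  have : (↑u - Y.comp X : E →L[R] E) = ↑u * (1 - ((↑u⁻¹ : E →L[R] E).comp Y).comp X) := by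
    rw [mul_sub, mul_one, mul_def, ← comp_assoc, ← comp_assoc, ← mul_def, Units.mul_inv, one_def,
      id_comp]
  rw [this, Units.isUnit_units_mul, isUnit_one_sub_comp_comm]

theorem ringInverse_apply_apply {T : E →L[R] E} (hT : IsUnit T) (x : E) :
    Ring.inverse T (T x) = x := by
  rw [← mul_apply_eq_comp, Ring.inverse_mul_cancel T hT, one_apply_eq_self]

end OperatorUnits

theorem mul_ringInverse_smul_one_sub_mul {R A : Type*} [CommSemiring R] [Ring A] [Algebra R A]
    {r : R} {x y : A} (hxy : IsUnit (r • 1 - x * y)) (hyx : IsUnit (r • 1 - y * x)) :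
    x * Ring.inverse (r • 1 - y * x) = Ring.inverse (r • 1 - x * y) * x := by
  have : SemiconjBy x hyx.unit hxy.unit := by
    simp [SemiconjBy, mul_sub, sub_mul, mul_assoc]
  rw [← hyx.unit_spec, ← hxy.unit_spec, Ring.inverse_unit, Ring.inverse_unit]
  exact this.units_inv_right

section BlockOperators

variable {E F : Type*} [NormedAddCommGroup E] [NormedSpace ℂ E]
  [NormedAddCommGroup F] [NormedSpace ℂ F] {l : ℕ}

theorem apply_ringInverse_smul_one_sub_mul {r : ℂ} {f g : E →L[ℂ] E}
    (hfg : IsUnit (r • 1 - f * g)) (hgf : IsUnit (r • 1 - g * f)) (x : E) :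
    f (Ring.inverse (r • 1 - g * f) x) = Ring.inverse (r • 1 - f * g) (f x) := by
  simpa only [mul_apply_eq_comp] using
    DFunLike.congr_fun (mul_ringInverse_smul_one_sub_mul hfg hgf) x

def toPiLp (T : Fin l → F →L[ℂ] E) : F →L[ℂ] PiLp 2 (fun _ : Fin l => E) :=
  (pilpOfPi l E).comp (ContinuousLinearMap.pi T)

@[simp]
theorem pilpOfPi_apply (f : Fin l → E) (i : Fin l) : pilpOfPi l E f i = f i := rfl

@[simp]
theorem toPiLp_apply (T : Fin l → F →L[ℂ] E) (x : F) (i : Fin l) : toPiLp T x i = T i x := rfl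

@[simp]
theorem pilpProj_apply (j : Fin l) (v : PiLp 2 (fun _ : Fin l => E)) :
    pilpProj l E j v = v j :=
  rfl

def sumOp (f : Fin l → E →L[ℂ] E) : PiLp 2 (fun _ : Fin l => E) →L[ℂ] E :=
  ∑ j, (f j).comp (pilpProj l E j)

@[simp]
theorem sumOp_apply (f : Fin l → E →L[ℂ] E) (v : PiLp 2 (fun _ : Fin l => E)) :
    sumOp f v = ∑ j, f j (v j) := by
  simp [sumOp]

variable (g : Fin l → E →L[ℂ] E) (inv : Fin l → Fin l) (lam : ℂ)

def pairOp : PiLp 2 (fun _ : Fin l => E) →L[ℂ] PiLp 2 (fun _ : Fin l => E) :=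
  toPiLp fun i => lam • pilpProj l E i + (g i).comp (pilpProj l E (inv i))

def pairOpInv : PiLp 2 (fun _ : Fin l => E) →L[ℂ] PiLp 2 (fun _ : Fin l => E) :=
  toPiLp fun i => (Ring.inverse (lam ^ 2 • (1 : E →L[ℂ] E) - g i * g (inv i))).comp
    (lam • pilpProj l E i - (g i).comp (pilpProj l E (inv i)))

variable {g inv lam}

@[simps]
def pairOpUnit (hinv : ∀ i, inv (inv i) = i)
    (hg : ∀ i, IsUnit (lam ^ 2 • (1 : E →L[ℂ] E) - g i * g (inv i))) :
    (PiLp 2 (fun _ : Fin l => E) →L[ℂ] PiLp 2 (fun _ : Fin l => E))ˣ where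
  val := pairOp g inv lam
  inv := pairOpInv g inv lam
  val_inv := by
    ext v i
    have hg' : IsUnit (lam ^ 2 • (1 : E →L[ℂ] E) - g (inv i) * g i) := by
      simpa only [hinv] using hg (inv i)
    rw [one_apply_eq_self]
    conv_rhs => rw [← ringInverse_apply_apply (hg i) (v i)]
    simp only [pairOp, pairOpInv, toPiLp_apply, add_apply, sub_apply, smul_apply, comp_apply,
      pilpProj_apply, hinv, map_sub, map_smul, apply_ringInverse_smul_one_sub_mul (hg i) hg',
      mul_apply_eq_comp, one_apply_eq_self]
    module
  inv_val := by
    ext v i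
    rw [one_apply_eq_self]
    conv_rhs => rw [← ringInverse_apply_apply (hg i) (v i)]
    simp only [pairOp, pairOpInv, toPiLp_apply, add_apply, sub_apply, smul_apply, comp_apply,
      pilpProj_apply, hinv, map_add, map_sub, map_smul, mul_apply_eq_comp, one_apply_eq_self]
    module

end BlockOperators

section NonBacktracking

variable {l : ℕ} (b : Fin l → H →L[ℂ] H) (inv : Fin l → Fin l) (lam : ℂ)

theorem nbOp_apply (v : PiLp 2 (fun _ : Fin l => H)) (i : Fin l) :
    nbOp H b inv v i = ∑ j, b j (v j) - b (inv i) (v (inv i)) := by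
  simp [nbOp, Finset.sum_ite, Finset.filter_ne', Finset.sum_erase_eq_sub]

theorem nbOpL_apply (v : PiLp 2 (fun _ : Fin l => H)) (i : Fin l) :
    nbOpL H b inv v i = b i (∑ j, v j - v (inv i)) := by
  simp [nbOpL, Finset.sum_ite, Finset.filter_ne', Finset.sum_erase_eq_sub]

theorem smul_one_sub_nbOp : lam • 1 - nbOp H b inv =
    pairOp (fun i => b (inv i)) inv lam - (toPiLp fun _ => 1).comp (sumOp b) := by
  ext v i
  simp only [sub_apply, smul_apply, one_apply_eq_self, PiLp.sub_apply, PiLp.smul_apply, nbOp_apply,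
    pairOp, comp_apply, sumOp_apply, toPiLp_apply, add_apply, pilpProj_apply]
  abel

theorem smul_one_sub_nbOpL :
    lam • 1 - nbOpL H b inv = pairOp b inv lam - (toPiLp b).comp (sumOp fun _ => 1) := by
  ext v i
  simp only [sub_apply, smul_apply, one_apply_eq_self, PiLp.sub_apply, PiLp.smul_apply, nbOpL_apply,
    map_sub, pairOp, comp_apply, sumOp_apply, toPiLp_apply, add_apply, pilpProj_apply]
  abel

variable [CompleteSpace H]

theorem aLam_add_one : aLam b inv lam + 1 =
    ∑ i, b i * Ring.inverse (lam ^ 2 • 1 - b (inv i) * b i) * (lam • 1 - b (inv i)) := by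
  simp only [aLam, bZeroLam, bLam, mul_sub, mul_one, mul_smul_comm, Finset.sum_sub_distrib]
  abel

variable {b inv lam}

theorem sumOp_comp_pairOpInv_comp_toPiLp_one (hinv : ∀ i, inv (inv i) = i) :
    (sumOp b).comp ((pairOpInv (fun i => b (inv i)) inv lam).comp (toPiLp fun _ => 1)) =
      aLam b inv lam + 1 := by
  ext h
  simp [aLam_add_one, pairOpInv, hinv, sum_apply]

theorem sumOp_one_comp_pairOpInv_comp_toPiLp (hinv : ∀ i, inv (inv i) = i)
    (hc : ∀ i, IsUnit (lam ^ 2 • (1 : H →L[ℂ] H) - b (inv i) * b i)) :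
    (sumOp fun _ => 1).comp ((pairOpInv b inv lam).comp (toPiLp b)) = aLam b inv lam + 1 := by
  have hc' (i : Fin l) : IsUnit (lam ^ 2 • (1 : H →L[ℂ] H) - b i * b (inv i)) := by
    simpa only [hinv] using hc (inv i)
  ext h
  simp [aLam_add_one, pairOpInv, apply_ringInverse_smul_one_sub_mul (hc' _) (hc _), sum_apply]

theorem isUnit_smul_one_sub_nbOp_iff (hinv : ∀ i, inv (inv i) = i)
    (hc : ∀ i, IsUnit (lam ^ 2 • (1 : H →L[ℂ] H) - b (inv i) * b i)) :
    IsUnit (lam • 1 - nbOp H b inv) ↔ IsUnit (aLam b inv lam) := by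
  have hg : ∀ i, IsUnit (lam ^ 2 • (1 : H →L[ℂ] H) - b (inv i) * b (inv (inv i))) := by
    simpa only [hinv] using hc
  rw [smul_one_sub_nbOp, ← val_pairOpUnit hinv hg, isUnit_units_sub_comp_iff, val_inv_pairOpUnit,
    sumOp_comp_pairOpInv_comp_toPiLp_one hinv, sub_add_cancel_right, IsUnit.neg_iff]

theorem isUnit_smul_one_sub_nbOpL_iff (hinv : ∀ i, inv (inv i) = i)
    (hc : ∀ i, IsUnit (lam ^ 2 • (1 : H →L[ℂ] H) - b (inv i) * b i)) :
    IsUnit (lam • 1 - nbOpL H b inv) ↔ IsUnit (aLam b inv lam) := by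
  have hg (i : Fin l) : IsUnit (lam ^ 2 • (1 : H →L[ℂ] H) - b i * b (inv i)) := by
    simpa only [hinv] using hc (inv i)
  rw [smul_one_sub_nbOpL, ← val_pairOpUnit hinv hg, isUnit_units_sub_comp_iff, val_inv_pairOpUnit,
    sumOp_one_comp_pairOpInv_comp_toPiLp hinv hc, sub_add_cancel_right, IsUnit.neg_iff]

end NonBacktracking

/-- **Proposition (spectral mapping for non-backtracking operators).** Let `b_1, …, b_ℓ` be
bounded operators on a Hilbert space `H`, `i ↦ i*` an involution of `[ℓ]`, and `λ ∈ ℂ` with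
`λ² ∉ σ(b_{i*} b_i)` for all `i`. Then `λ ∈ σ(B)` iff `0 ∈ σ(A^{(λ)})`, and likewise
`λ ∈ σ(B̃)` iff `0 ∈ σ(A^{(λ)})`. -/
theorem statement16 [CompleteSpace H] {l : ℕ}
    (b : Fin l → H →L[ℂ] H) (inv : Fin l → Fin l) (hinv : ∀ i, inv (inv i) = i)
    (lam : ℂ)
    (hlam : ∀ i, lam ^ 2 ∉ spectrum ℂ (b (inv i) * b i)) :
    (lam ∈ spectrum ℂ (nbOp H b inv) ↔ (0 : ℂ) ∈ spectrum ℂ (aLam b inv lam)) ∧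
    (lam ∈ spectrum ℂ (nbOpL H b inv) ↔ (0 : ℂ) ∈ spectrum ℂ (aLam b inv lam)) := by
  have hc (i : Fin l) : IsUnit (lam ^ 2 • (1 : H →L[ℂ] H) - b (inv i) * b i) := by
    simpa [spectrum.mem_iff, Algebra.algebraMap_eq_smul_one] using hlam i
  simp only [spectrum.mem_iff, Algebra.algebraMap_eq_smul_one, zero_smul, zero_sub,
    IsUnit.neg_iff, isUnit_smul_one_sub_nbOp_iff hinv hc, isUnit_smul_one_sub_nbOpL_iff hinv hc,
    and_self]

end SAF
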